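/- arXiv:2002.01754 — 2 statements merged into one kernel-verified Lean document; each statement's English description precedes it below -/
import Mathlib

section
/- Let (X,d) be a complete b-metric space with coefficient s ≥ 1. For each i ∈ ℕ₀ let T_i : X → X be a weak quasi-contraction satisfying diam O_{T_j}(T_i x, T_i y) ≤ diam O_{T_j}(x,y) for all x,y ∈ X and all i,j ∈ ℕ₀. Let 𝔉 be a set of mappings f : ℕ₀ → ℕ₀ with property (F). Assume (P8): for each ε > 0 there exists n_ε ∈ ℕ such that for each f ∈ 𝔉 and each x,y ∈ X one has d(T_{f(n_ε)}T_{f(n_ε−1)}⋯T_{f(1)}T_{f(0)}x, T_{f(n_ε)}T_{f(n_ε−1)}⋯T_{f(1)}T_{f(0)}y) < ε. Then for each ε > 0 there exist δ > 0 and n ∈ ℕ such that for each f ∈ 𝔉 and each pair of sequences {x_i}_{i=0}^∞, {y_i}_{i=0}^∞ ⊆ X satisfying diam O_{T_{f(j)}}(x_{i+1}, T_{f(i)}x_i) ≤ δ and diam O_{T_{f(j)}}(y_{i+1}, T_{f(i)}y_i) ≤ δ for all i,j ∈ ℕ₀, one has d(x_i, y_i) < ε for all i ≥ n. -/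
open Set Filter Topology

/-- The orbit of `x` under `T`: `{Tⁿ x : n ∈ ℕ₀}`. -/
def orb {X : Type*} (T : X → X) (x : X) : Set X := {y | ∃ n : ℕ, y = T^[n] x}

/-- The double orbit `O_T(x,y) = O_T(x) ∪ O_T(y)`. -/
def orb2 {X : Type*} (T : X → X) (x y : X) : Set X := orb T x ∪ orb T y

/-- The set of pairwise distances of points of `A`. -/
def distSet {X : Type*} (d : X → X → ℝ) (A : Set X) : Set ℝ :=
  {r | ∃ a ∈ A, ∃ b ∈ A, r = d a b}

/-- The diameter of `A` with respect to the distance function `d`. -/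
noncomputable def diamd {X : Type*} (d : X → X → ℝ) (A : Set X) : ℝ :=
  sSup (distSet d A)

/-- The distance from a point to a set: `inf {d x a : a ∈ A}`. -/
noncomputable def distPtSet {X : Type*} (d : X → X → ℝ) (x : X) (A : Set X) : ℝ :=
  sInf {r | ∃ a ∈ A, r = d x a}

/-- `d` is a b-metric on `X` with coefficient `s ≥ 1`. -/
def IsBMetric {X : Type*} (d : X → X → ℝ) (s : ℝ) : Prop :=
  1 ≤ s ∧ (∀ x y, 0 ≤ d x y) ∧ (∀ x y, d x y = 0 ↔ x = y) ∧ (∀ x y, d x y = d y x) ∧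
    (∀ x y z, d x y ≤ s * (d x z + d z y))

/-- `(X,d)` is a complete b-metric space with coefficient `s`. -/
def IsCompleteBMetric {X : Type*} (d : X → X → ℝ) (s : ℝ) : Prop :=
  IsBMetric d s ∧
    ∀ u : ℕ → X, (∀ ε > (0 : ℝ), ∃ N : ℕ, ∀ m ≥ N, ∀ n ≥ N, d (u m) (u n) < ε) →
      ∃ x : X, Tendsto (fun n => d (u n) x) atTop (𝓝 0)

/-- `ψ : [0,∞) → [0,∞)` is increasing, upper semicontinuous, `ψ 0 = 0`, `ψ t < t` for `t > 0`. -/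
def IsComparison (ψ : ℝ → ℝ) : Prop :=
  MonotoneOn ψ (Ici 0) ∧ UpperSemicontinuousOn ψ (Ici 0) ∧
    (∀ t ≥ (0 : ℝ), 0 ≤ ψ t) ∧ ψ 0 = 0 ∧ ∀ t > (0 : ℝ), ψ t < t

/-- `T` is a weak quasi-contraction: bounded orbits and
`d(Tx,Ty) ≤ ψ(diam O_T(x,y))` for some comparison function `ψ`. -/
def IsWeakQuasiContraction {X : Type*} (d : X → X → ℝ) (T : X → X) : Prop :=
  (∀ x y, BddAbove (distSet d (orb2 T x y))) ∧
    ∃ ψ : ℝ → ℝ, IsComparison ψ ∧ ∀ x y, d (T x) (T y) ≤ ψ (diamd d (orb2 T x y))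

/-- `E` is closed with respect to `d`-convergence. -/
def IsClosedD {X : Type*} (d : X → X → ℝ) (E : Set X) : Prop :=
  ∀ (u : ℕ → X) (x : X), (∀ n, u n ∈ E) →
    Tendsto (fun n => d (u n) x) atTop (𝓝 0) → x ∈ E

/-- `T` is O-b continuous: `x_n → x` implies `diam O_T(x_n, x) → 0`. -/
def OBContinuous {X : Type*} (d : X → X → ℝ) (T : X → X) : Prop :=
  ∀ (u : ℕ → X) (x : X), Tendsto (fun n => d (u n) x) atTop (𝓝 0) →
    Tendsto (fun n => diamd d (orb2 T (u n) x)) atTop (𝓝 0)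

/-- The composition `T_{f n} ∘ T_{f (n-1)} ∘ ⋯ ∘ T_{f 0}`. -/
def compSeq {X : Type*} (T : ℕ → X → X) (f : ℕ → ℕ) : ℕ → X → X
  | 0 => T (f 0)
  | n + 1 => fun x => T (f (n + 1)) (compSeq T f n x)

/-- Property (F): `𝓕` is closed under shifts by positive naturals. -/
def PropF (𝓕 : Set (ℕ → ℕ)) : Prop :=
  ∀ f ∈ 𝓕, ∀ p : ℕ, 0 < p → (fun i => f (i + p)) ∈ 𝓕

/-! A `δ`-pseudo-orbit, with errors measured by orbit diameters, stays within `(k + 1) sᵏ⁺¹ δ`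
of the true orbit after `k` steps: each step adds `δ`, the maps `T i` do not increase orbit
diameters so the earlier error is carried forward, and the b-triangle inequality costs a factor `s`.
For `i > m`, compare `x i` and `y i` with the true orbits of `x p` and `y p` under the maps shifted
by `p = i - (m + 1)`; by property (F) the shifted `f` lies in `𝓕`, so (P8) makes these true orbits
`ε / (2 s²)`-close after `m` steps. -/

section BMetric

variable {X : Type*} {d : X → X → ℝ} {s : ℝ}

lemma mem_orb2_left (T : X → X) (x y : X) : x ∈ orb2 T x y :=
  Or.inl ⟨0, rfl⟩

lemma mem_orb2_right (T : X → X) (x y : X) : y ∈ orb2 T x y :=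
  Or.inr ⟨0, rfl⟩

lemma le_diamd {A : Set X} (hA : BddAbove (distSet d A)) {a b : X} (ha : a ∈ A) (hb : b ∈ A) :
    d a b ≤ diamd d A :=
  le_csSup hA ⟨a, ha, b, hb, rfl⟩

lemma diamd_le {A : Set X} {M : ℝ} (hne : A.Nonempty) (h : ∀ a ∈ A, ∀ b ∈ A, d a b ≤ M) :
    diamd d A ≤ M := by
  obtain ⟨a, ha⟩ := hne
  refine csSup_le ⟨d a a, a, ha, a, ha, rfl⟩ ?_
  rintro r ⟨a, ha, b, hb, rfl⟩
  exact h a ha b hb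

lemma dist_le_diamd_orb2 {T : X → X} {x y : X} (hb : BddAbove (distSet d (orb2 T x y))) :
    d x y ≤ diamd d (orb2 T x y) :=
  le_diamd hb (mem_orb2_left T x y) (mem_orb2_right T x y)

namespace IsBMetric

variable (hd : IsBMetric d s)
include hd

lemma diamd_orb2_nonneg {T : X → X} {x y : X} (hb : BddAbove (distSet d (orb2 T x y))) :
    0 ≤ diamd d (orb2 T x y) :=
  (hd.2.2.1 x x).2 rfl ▸ le_diamd hb (mem_orb2_left T x y) (mem_orb2_left T x y)

lemma diamd_orb2_le_mul_add {T : X → X} (hb : ∀ x y, BddAbove (distSet d (orb2 T x y)))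
    (a b c : X) :
    diamd d (orb2 T a c) ≤ s * (diamd d (orb2 T a b) + diamd d (orb2 T b c)) := by
  have hab := hd.diamd_orb2_nonneg (hb a b)
  have hbc := hd.diamd_orb2_nonneg (hb b c)
  obtain ⟨hs, -, -, hsymm, htri⟩ := hd
  have cross : ∀ u ∈ orb T a, ∀ v ∈ orb T c,
      d u v ≤ s * (diamd d (orb2 T a b) + diamd d (orb2 T b c)) := fun u hu v hv =>
    (htri u v b).trans <| mul_le_mul_of_nonneg_left
      (add_le_add (le_diamd (hb a b) (Or.inl hu) (mem_orb2_right T a b))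
        (le_diamd (hb b c) (mem_orb2_left T b c) (Or.inr hv))) (by linarith)
  refine diamd_le ⟨a, mem_orb2_left T a c⟩ ?_
  rintro u (hu | hu) v (hv | hv)
  · have := le_diamd (hb a b) (Or.inl hu) (Or.inl hv)
    nlinarith
  · exact cross u hu v hv
  · exact hsymm u v ▸ cross v hv u hu
  · have := le_diamd (hb b c) (Or.inr hu) (Or.inr hv)
    nlinarith

lemma dist_le_sq_mul_add_add (a b c e : X) : d a b ≤ s ^ 2 * (d a c + d c e + d e b) := by
  obtain ⟨hs, hnn, -, -, htri⟩ := hd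
  calc d a b ≤ s * (d a c + d c b) := htri a b c
    _ ≤ s * (s * d a c + s * (d c e + d e b)) := by
        gcongr
        · exact le_mul_of_one_le_left (hnn a c) hs
        · exact htri c b e
    _ = s ^ 2 * (d a c + d c e + d e b) := by ring

lemma diamd_orb2_compSeq_le {T : ℕ → X → X} {S : X → X}
    (hb : ∀ x y, BddAbove (distSet d (orb2 S x y)))
    (hmono : ∀ i x y, diamd d (orb2 S (T i x) (T i y)) ≤ diamd d (orb2 S x y))
    {f : ℕ → ℕ} {z : ℕ → X} {δ : ℝ}
    (hz : ∀ i, diamd d (orb2 S (z (i + 1)) (T (f i) (z i))) ≤ δ) (k : ℕ) :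
    diamd d (orb2 S (z (k + 1)) (compSeq T f k (z 0))) ≤ (k + 1) * s ^ (k + 1) * δ := by
  have hs : 1 ≤ s := hd.1
  have hδ : 0 ≤ δ := (hd.diamd_orb2_nonneg (hb _ _)).trans (hz 0)
  induction k with
  | zero => simpa [compSeq] using (hz 0).trans (le_mul_of_one_le_left hδ hs)
  | succ k ih =>
    have hspow : s ≤ s * s ^ (k + 1) := le_mul_of_one_le_right (by linarith) (one_le_pow₀ hs)
    calc diamd d (orb2 S (z (k + 2)) (T (f (k + 1)) (compSeq T f k (z 0))))
        ≤ s * (diamd d (orb2 S (z (k + 2)) (T (f (k + 1)) (z (k + 1))))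
            + diamd d (orb2 S (T (f (k + 1)) (z (k + 1))) (T (f (k + 1)) (compSeq T f k (z 0))))) :=
          hd.diamd_orb2_le_mul_add hb _ _ _
      _ ≤ s * (δ + (k + 1) * s ^ (k + 1) * δ) := by
          gcongr
          exacts [hz (k + 1), (hmono _ _ _).trans ih]
      _ ≤ ((k + 1 : ℕ) + 1) * s ^ (k + 1 + 1) * δ := by
          rw [pow_succ' s (k + 1)]
          push_cast
          nlinarith [mul_le_mul_of_nonneg_right hspow hδ]

end IsBMetric

end BMetric

theorem stmt10 {X : Type*} (d : X → X → ℝ) (s : ℝ)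
    (hX : IsCompleteBMetric d s)
    (T : ℕ → X → X) (hT : ∀ i : ℕ, IsWeakQuasiContraction d (T i))
    (hmono : ∀ i j : ℕ, ∀ x y : X,
      diamd d (orb2 (T j) (T i x) (T i y)) ≤ diamd d (orb2 (T j) x y))
    (𝓕 : Set (ℕ → ℕ)) (hF : PropF 𝓕)
    (hP8 : ∀ ε > (0 : ℝ), ∃ n : ℕ, ∀ f ∈ 𝓕, ∀ x y : X,
      d (compSeq T f n x) (compSeq T f n y) < ε) :
    ∀ ε > (0 : ℝ), ∃ δ > (0 : ℝ), ∃ n : ℕ, ∀ f ∈ 𝓕, ∀ x y : ℕ → X,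
      (∀ i j : ℕ, diamd d (orb2 (T (f j)) (x (i + 1)) (T (f i) (x i))) ≤ δ) →
      (∀ i j : ℕ, diamd d (orb2 (T (f j)) (y (i + 1)) (T (f i) (y i))) ≤ δ) →
      ∀ i ≥ n, d (x i) (y i) < ε := by
  obtain ⟨hd, -⟩ := hX
  have hs : 0 < s := one_pos.trans_le hd.1
  have hb : ∀ j a b, BddAbove (distSet d (orb2 (T j) a b)) := fun j => (hT j).1
  intro ε hε
  obtain ⟨m, hm⟩ := hP8 (ε / (2 * s ^ 2)) (by positivity)
  set K : ℝ := (m + 1) * s ^ (m + 1)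
  set δ := ε / (4 * s ^ 2 * K)
  refine ⟨δ, by positivity, m + 2, fun f hf x y hx hy i hi => ?_⟩
  obtain ⟨p, rfl⟩ : ∃ p, i = p + m + 1 := ⟨i - (m + 1), by omega⟩
  set g : ℕ → ℕ := fun i => f (i + p)
  have tracks : ∀ z : ℕ → X,
      (∀ i j, diamd d (orb2 (T (f j)) (z (i + 1)) (T (f i) (z i))) ≤ δ) →
      d (z (p + m + 1)) (compSeq T g m (z p)) ≤ K * δ := by
    intro z hz
    have := hd.diamd_orb2_compSeq_le (hb (f 0)) (fun i => hmono i (f 0)) (f := g)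
      (z := fun i => z (i + p)) (fun i => by simpa [Nat.add_right_comm] using hz (i + p) 0) m
    rw [show m + 1 + p = p + m + 1 by omega, zero_add] at this
    exact (dist_le_diamd_orb2 (hb (f 0) _ _)).trans this
  have hxy := hm g (hF f hf p (by omega)) (x p) (y p)
  calc d (x (p + m + 1)) (y (p + m + 1))
      ≤ s ^ 2 * (d (x (p + m + 1)) (compSeq T g m (x p))
          + d (compSeq T g m (x p)) (compSeq T g m (y p))
          + d (compSeq T g m (y p)) (y (p + m + 1))) := hd.dist_le_sq_mul_add_add _ _ _ _
    _ < s ^ 2 * (K * δ + ε / (2 * s ^ 2) + K * δ) := by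
        rw [hd.2.2.2.1 _ (y _)]
        refine mul_lt_mul_of_pos_left ?_ (by positivity)
        linarith [tracks x hx, tracks y hy]
    _ = ε := by
        have hK : 0 < K := by positivity
        simp only [δ]
        field_simp
        ring
end

section
/- Let (X,d) be a b-metric space with coefficient s ≥ 1. For each i ∈ ℕ₀ let T_i : X → X be a weak quasi-contraction, and suppose diam O_{T_{f(j)}}(T_{f(i)}x, T_{f(i)}y) ≤ diam O_{T_{f(j)}}(x,y) for all x,y ∈ X and all i,j ∈ ℕ₀, where f : ℕ₀ → ℕ₀ is a fixed mapping. Let δ > 0 and let {x_i}_{i=0}^∞ ⊆ X satisfy diam O_{T_{f(j)}}(x_{i+1}, T_{f(i)}x_i) ≤ δ for all i,j ∈ ℕ₀, and assume additionally diam O_{T_{f(j)}}(x_0) ≤ δ for all j ∈ ℕ₀. Define the exact orbit y_0 = x_0 and y_{i+1} = T_{f(i)}y_i for all i ∈ ℕ₀. Then diam O_{T_{f(j)}}(x_i, y_i) ≤ (i+1) sⁱ δ for all i,j ∈ ℕ₀. -/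
open Set Filter Topology

lemma self_mem_orb' {X : Type*} (T : X → X) (x : X) : x ∈ orb T x := ⟨0, rfl⟩

lemma diamd_nonneg' {X : Type*} (d : X → X → ℝ) (hd : ∀ x y, 0 ≤ d x y) (T : X → X) (a b : X)
    (hbdd : BddAbove (distSet d (orb2 T a b))) : 0 ≤ diamd d (orb2 T a b) := by
  have h0 : d a a ∈ distSet d (orb2 T a b) :=
    ⟨a, Or.inl (self_mem_orb' T a), a, Or.inl (self_mem_orb' T a), rfl⟩
  exact le_trans (hd a a) (le_csSup hbdd h0)

lemma diamd_tri' {X : Type*} (d : X → X → ℝ) (s : ℝ) (hX : IsBMetric d s) (T : X → X)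
    (hb : ∀ x y : X, BddAbove (distSet d (orb2 T x y))) (a b c : X) :
    diamd d (orb2 T a c) ≤ s * (diamd d (orb2 T a b) + diamd d (orb2 T b c)) := by
  obtain ⟨hs1, hd0, _, _, htri⟩ := hX
  set A := diamd d (orb2 T a b) with hA'
  set B := diamd d (orb2 T b c) with hB'
  have keyA : ∀ p ∈ orb2 T a b, ∀ q ∈ orb2 T a b, d p q ≤ A :=
    fun p hp q hq => le_csSup (hb a b) ⟨p, hp, q, hq, rfl⟩
  have keyB : ∀ p ∈ orb2 T b c, ∀ q ∈ orb2 T b c, d p q ≤ B :=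
    fun p hp q hq => le_csSup (hb b c) ⟨p, hp, q, hq, rfl⟩
  have hA : 0 ≤ A := diamd_nonneg' d hd0 T a b (hb a b)
  have hB : 0 ≤ B := diamd_nonneg' d hd0 T b c (hb b c)
  apply Real.sSup_le
  · rintro r ⟨u, hu, v, hv, rfl⟩
    have hbmem : b ∈ orb T b := self_mem_orb' T b
    have huv : d u v ≤ s * (d u b + d b v) := htri u v b
    rcases hu with hu | hu <;> rcases hv with hv | hv
    · have := keyA u (Or.inl hu) v (Or.inl hv); nlinarith
    · have h1 : d u b ≤ A := keyA u (Or.inl hu) b (Or.inr hbmem)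
      have h2 : d b v ≤ B := keyB b (Or.inl hbmem) v (Or.inr hv)
      nlinarith
    · have h1 : d u b ≤ B := keyB u (Or.inr hu) b (Or.inl hbmem)
      have h2 : d b v ≤ A := keyA b (Or.inr hbmem) v (Or.inl hv)
      nlinarith
    · have := keyB u (Or.inr hu) v (Or.inr hv); nlinarith
  · nlinarith

theorem stmt12 {X : Type*} (d : X → X → ℝ) (s : ℝ)
    (hX : IsBMetric d s)
    (T : ℕ → X → X) (hT : ∀ i : ℕ, IsWeakQuasiContraction d (T i))
    (f : ℕ → ℕ)
    (hmono : ∀ i j : ℕ, ∀ x y : X,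
      diamd d (orb2 (T (f j)) (T (f i) x) (T (f i) y)) ≤ diamd d (orb2 (T (f j)) x y))
    (δ : ℝ) (hδ : 0 < δ) (x : ℕ → X)
    (hx : ∀ i j : ℕ, diamd d (orb2 (T (f j)) (x (i + 1)) (T (f i) (x i))) ≤ δ)
    (hx0 : ∀ j : ℕ, diamd d (orb (T (f j)) (x 0)) ≤ δ)
    (y : ℕ → X) (hy0 : y 0 = x 0) (hy : ∀ i : ℕ, y (i + 1) = T (f i) (y i)) :
    ∀ i j : ℕ, diamd d (orb2 (T (f j)) (x i) (y i)) ≤ ((i : ℝ) + 1) * s ^ i * δ := by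
  have hs1 : 1 ≤ s := hX.1
  have hd0 : ∀ a b, 0 ≤ d a b := hX.2.1
  intro i
  induction i with
  | zero =>
    intro j
    have heq : orb2 (T (f j)) (x 0) (y 0) = orb (T (f j)) (x 0) := by
      rw [hy0]; exact Set.union_self _
    rw [heq]
    simpa using hx0 j
  | succ i ih =>
    intro j
    have hb := (hT (f j)).1
    have h1 : diamd d (orb2 (T (f j)) (x (i + 1)) (y (i + 1))) ≤
        s * (diamd d (orb2 (T (f j)) (x (i + 1)) (T (f i) (x i))) +
             diamd d (orb2 (T (f j)) (T (f i) (x i)) (T (f i) (y i)))) := by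
      rw [hy i]
      exact diamd_tri' d s hX (T (f j)) hb (x (i + 1)) (T (f i) (x i)) (T (f i) (y i))
    have h2 : diamd d (orb2 (T (f j)) (T (f i) (x i)) (T (f i) (y i))) ≤
        ((i : ℝ) + 1) * s ^ i * δ := le_trans (hmono i j (x i) (y i)) (ih j)
    have h3 := hx i j
    have hpow : s ^ (i + 1) = s ^ i * s := pow_succ s i
    have hsp : s ≤ s ^ (i + 1) := le_self_pow₀ hs1 (Nat.succ_ne_zero i)
    have hp0 : (0:ℝ) ≤ s ^ i := pow_nonneg (by linarith) i
    have h4 : s * (diamd d (orb2 (T (f j)) (x (i + 1)) (T (f i) (x i))) +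
             diamd d (orb2 (T (f j)) (T (f i) (x i)) (T (f i) (y i)))) ≤
        s * (δ + ((i : ℝ) + 1) * s ^ i * δ) :=
      mul_le_mul_of_nonneg_left (by linarith) (by linarith)
    have h5 : s * (δ + ((i : ℝ) + 1) * s ^ i * δ) ≤ ((i : ℝ) + 1 + 1) * s ^ (i + 1) * δ := by
      have hi0 : (0:ℝ) ≤ (i : ℝ) := Nat.cast_nonneg i
      have key : s * δ ≤ s ^ i * s * δ := by
        rw [← hpow]; exact mul_le_mul_of_nonneg_right hsp hδ.le
      rw [hpow]
      nlinarith [key]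
    calc diamd d (orb2 (T (f j)) (x (i + 1)) (y (i + 1))) ≤ _ := h1
      _ ≤ _ := h4
      _ ≤ ((i : ℝ) + 1 + 1) * s ^ (i + 1) * δ := h5
      _ = ((i + 1 : ℕ) + 1 : ℝ) * s ^ (i + 1) * δ := by push_cast; ring
end
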